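/- arXiv:1911.02029 — 2 statements merged into one kernel-verified Lean document; each statement's English description precedes it below -/
import Mathlib

section
/- Let (X, A, Y) be random variables with A ∈ {0,1}, and let p(x) = E[A | X = x] ∈ (0,1), b(x) = E[Y | A = 1, X = x]. For any measurable functions p* with p*(X) > 0 a.s. and b*, define H(p*, b*) = (A/p*(X)) Y − (A/p*(X)) b*(X) + b*(X). Then E[H(p*, b*)] − E[(A/p(X))Y] = E[ (p(X)/p*(X) − 1)(b(X) − b*(X)) ]. In particular E[H(p*, b*)] = E[(A/p(X))Y] whenever p* = p a.s. or b* = b a.s. -/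
/-!
Pointwise, `H(p*, b*) − (A/p) Y − (p/p* − 1)(b − b*)` equals
`c₁ (A Y − E[A Y | X]) + c₂ (A − E[A | X])` with `c₁ = 1/p* − 1/p` and `c₂ = −b*/p*`: a sum of
conditionally centred variables with `X`-measurable coefficients, so its expectation vanishes.
Neither the coefficients nor the two summands need be integrable; multiplying by the
`X`-measurable weight `(1 + |c₁| + |c₂|)⁻¹` makes every term integrable, so the conditional
expectation of the weighted sum is zero, and since the weight is positive so is that of the sum.
-/

open MeasureTheory Filter

section

variable {Ω ι : Type*} {m mΩ : MeasurableSpace Ω} {μ : Measure Ω}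

lemma condExp_sub_condExp_ae_eq_zero {E : Type*} [NormedAddCommGroup E] [NormedSpace ℝ E]
    [CompleteSpace E] (hm : m ≤ mΩ) [SigmaFinite (μ.trim hm)] {h : Ω → E}
    (hh : Integrable h μ) : μ[h - μ[h | m] | m] =ᵐ[μ] 0 := by
  filter_upwards [condExp_sub hh (integrable_condExp (m := m) (f := h)) m,
    condExp_condExp_of_le (f := h) le_rfl hm] with ω hsub htower
  simp [hsub, htower]

lemma condExp_sum_mul_ae_eq_zero (hm : m ≤ mΩ) [SigmaFinite (μ.trim hm)] {s : Finset ι}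
    {c g : ι → Ω → ℝ} (hc : ∀ i ∈ s, StronglyMeasurable[m] (c i))
    (hg : ∀ i ∈ s, Integrable (g i) μ) (hg0 : ∀ i ∈ s, μ[g i | m] =ᵐ[μ] 0)
    (hint : Integrable (∑ i ∈ s, c i * g i) μ) :
    μ[∑ i ∈ s, c i * g i | m] =ᵐ[μ] 0 := by
  set w : Ω → ℝ := fun ω => (1 + ∑ i ∈ s, ‖c i ω‖)⁻¹
  have hw_pos (ω : Ω) : 0 < w ω := by positivity
  have hw_le (ω : Ω) : ‖w ω‖ ≤ 1 := by
    rw [Real.norm_of_nonneg (hw_pos ω).le]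
    exact inv_le_one_of_one_le₀ (le_add_of_nonneg_right (by positivity))
  have hwc_le (i) (hi : i ∈ s) (ω : Ω) : ‖w ω * c i ω‖ ≤ 1 := by
    have hci : ‖c i ω‖ ≤ 1 + ∑ j ∈ s, ‖c j ω‖ :=
      (Finset.single_le_sum (fun j _ => norm_nonneg (c j ω)) hi).trans
        (le_add_of_nonneg_left zero_le_one)
    rw [norm_mul, Real.norm_of_nonneg (hw_pos ω).le]
    exact inv_mul_le_one_of_le₀ hci (by positivity)
  have hwm : StronglyMeasurable[m] w := by
    have hsum : Measurable[m] fun ω => ∑ i ∈ s, ‖c i ω‖ :=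
      Finset.measurable_sum (m := m) s fun i hi => (hc i hi).norm.measurable
    exact (measurable_const.add hsum).inv.stronglyMeasurable
  have hwcm (i) (hi : i ∈ s) : StronglyMeasurable[m] (w * c i) := hwm.mul (hc i hi)
  have hweighted : μ[w * ∑ i ∈ s, c i * g i | m] =ᵐ[μ] 0 := by
    have hterm_int (i) (hi : i ∈ s) : Integrable (w * c i * g i) μ :=
      (hg i hi).bdd_mul ((hwcm i hi).mono hm).aestronglyMeasurable
        (Eventually.of_forall (hwc_le i hi))
    have hterm (i) (hi : i ∈ s) : μ[w * c i * g i | m] =ᵐ[μ] 0 := by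
      filter_upwards [condExp_mul_of_stronglyMeasurable_left (hwcm i hi) (hterm_int i hi) (hg i hi),
        hg0 i hi] with ω hpull hzero
      simp [hpull, hzero]
    rw [Finset.mul_sum]
    simp_rw [← mul_assoc]
    filter_upwards [condExp_finsetSum hterm_int m, (eventually_all_finset s).2 hterm]
      with ω hsum hzero
    simp [hsum, Finset.sum_apply, Finset.sum_eq_zero hzero]
  have hpull : μ[w * ∑ i ∈ s, c i * g i | m] =ᵐ[μ] w * μ[∑ i ∈ s, c i * g i | m] :=
    condExp_mul_of_stronglyMeasurable_left hwm
      (hint.bdd_mul ((hwm.mono hm).aestronglyMeasurable) (Eventually.of_forall hw_le)) hint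
  filter_upwards [hweighted, hpull] with ω h0 hprod
  simpa [(hw_pos ω).ne'] using hprod.symm.trans h0

lemma integral_sum_mul_sub_condExp_eq_zero (hm : m ≤ mΩ) [SigmaFinite (μ.trim hm)]
    {s : Finset ι} {c h : ι → Ω → ℝ} (hc : ∀ i ∈ s, StronglyMeasurable[m] (c i))
    (hh : ∀ i ∈ s, Integrable (h i) μ)
    (hint : Integrable (∑ i ∈ s, c i * (h i - μ[h i | m])) μ) :
    ∫ ω, (∑ i ∈ s, c i * (h i - μ[h i | m])) ω ∂μ = 0 := by
  have hcond := condExp_sum_mul_ae_eq_zero hm hc (fun i hi => (hh i hi).sub integrable_condExp)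
    (fun i hi => condExp_sub_condExp_ae_eq_zero hm (hh i hi)) hint
  rw [← integral_condExp hm, integral_congr_ae hcond, Pi.zero_def, integral_zero]

lemma doubly_robust_remainder_eq {a y p b ps bs : ℝ} (hp : p ≠ 0) (hps : ps ≠ 0) :
    a / ps * y - a / ps * bs + bs - a / p * y - (p / ps - 1) * (b - bs)
      = (1 / ps - 1 / p) * (a * y - p * b) + -(bs / ps) * (a - p) := by
  field_simp
  ring

lemma doubly_robust_bias_ae_eq_zero {p b ps bs : Ω → ℝ} (hp : ∀ᵐ ω ∂μ, p ω ≠ 0)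
    (hcorrect : ps =ᵐ[μ] p ∨ bs =ᵐ[μ] b) :
    (fun ω => (p ω / ps ω - 1) * (b ω - bs ω)) =ᵐ[μ] 0 := by
  rcases hcorrect with hps | hbs
  · filter_upwards [hps, hp] with ω hpsω hpω
    simp [hpsω, div_self hpω]
  · filter_upwards [hbs] with ω hbsω
    simp [hbsω]

end

theorem doubly_robust_identity_general
    {Ω : Type*} {mΩ : MeasurableSpace Ω} (μ : Measure Ω) [IsProbabilityMeasure μ]
    (mX : MeasurableSpace Ω) (hmX : mX ≤ mΩ)
    (A Y p b pstar bstar : Ω → ℝ)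
    -- p, b, p*, b* are functions of X :
    (hpm : Measurable[mX] p)
    (hpsm : Measurable[mX] pstar) (hbsm : Measurable[mX] bstar)
    -- p(X) = E[A | X] with 0 < p(X) < 1, p*(X) > 0 :
    (hp : μ[A | mX] =ᵐ[μ] p)
    (hp01 : ∀ᵐ ω ∂μ, 0 < p ω ∧ p ω < 1)
    (hps : ∀ᵐ ω ∂μ, 0 < pstar ω)
    -- b(X) = E[Y | A = 1, X], i.e. E[A·Y | X] = p(X)·b(X) :
    (hb : μ[fun ω => A ω * Y ω | mX] =ᵐ[μ] fun ω => p ω * b ω)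
    -- integrability of all quantities appearing below :
    (hint1 : Integrable (fun ω => A ω / pstar ω * Y ω
              - A ω / pstar ω * bstar ω + bstar ω) μ)
    (hint2 : Integrable (fun ω => A ω / p ω * Y ω) μ)
    (hint3 : Integrable (fun ω => (p ω / pstar ω - 1) * (b ω - bstar ω)) μ)
    (hAY : Integrable (fun ω => A ω * Y ω) μ) (hAint : Integrable A μ) :
    ((∫ ω, (A ω / pstar ω * Y ω - A ω / pstar ω * bstar ω + bstar ω) ∂μ)
        - ∫ ω, A ω / p ω * Y ω ∂μ
      = ∫ ω, (p ω / pstar ω - 1) * (b ω - bstar ω) ∂μ) ∧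
    ((pstar =ᵐ[μ] p ∨ bstar =ᵐ[μ] b) →
      (∫ ω, (A ω / pstar ω * Y ω - A ω / pstar ω * bstar ω + bstar ω) ∂μ)
        = ∫ ω, A ω / p ω * Y ω ∂μ) := by
  set H : Ω → ℝ := fun ω => A ω / pstar ω * Y ω - A ω / pstar ω * bstar ω + bstar ω
  set IPW : Ω → ℝ := fun ω => A ω / p ω * Y ω
  set T : Ω → ℝ := fun ω => (p ω / pstar ω - 1) * (b ω - bstar ω)
  set c : Fin 2 → Ω → ℝ := ![fun ω => 1 / pstar ω - 1 / p ω, fun ω => -(bstar ω / pstar ω)]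
  set h : Fin 2 → Ω → ℝ := ![fun ω => A ω * Y ω, A]
  have hc : ∀ i ∈ Finset.univ, StronglyMeasurable[mX] (c i) := by
    simp only [Finset.mem_univ, forall_const, Fin.forall_fin_two]
    exact ⟨((measurable_const.div hpsm).sub (measurable_const.div hpm)).stronglyMeasurable,
      (hbsm.div hpsm).neg.stronglyMeasurable⟩
  have hh : ∀ i ∈ Finset.univ, Integrable (h i) μ := by
    simpa only [Finset.mem_univ, forall_const, Fin.forall_fin_two] using ⟨hAY, hAint⟩
  have hremainder : H - IPW - T =ᵐ[μ] ∑ i, c i * (h i - μ[h i | mX]) := by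
    filter_upwards [hp, hb, hp01, hps] with ω hpω hbω hp_pos hps_pos
    simp only [H, IPW, T, c, h, Fin.sum_univ_two, Finset.sum_apply, Pi.sub_apply, Pi.mul_apply,
      Matrix.cons_val_zero, Matrix.cons_val_one, hpω, hbω]
    exact doubly_robust_remainder_eq hp_pos.1.ne' hps_pos.ne'
  have hremainder_zero : ∫ ω, (H - IPW - T) ω ∂μ = 0 :=
    (integral_congr_ae hremainder).trans (integral_sum_mul_sub_condExp_eq_zero hmX hc hh
      (((hint1.sub hint2).sub hint3).congr hremainder))
  have hbias : ∫ ω, H ω ∂μ - ∫ ω, IPW ω ∂μ = ∫ ω, T ω ∂μ := by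
    rw [Pi.sub_def, integral_sub (hint1.sub hint2) hint3, Pi.sub_def,
      integral_sub hint1 hint2] at hremainder_zero
    linarith
  refine ⟨hbias, fun hcorrect => ?_⟩
  have hT : T =ᵐ[μ] 0 :=
    doubly_robust_bias_ae_eq_zero (hp01.mono fun ω hpω => hpω.1.ne') hcorrect
  rw [integral_congr_ae hT, Pi.zero_def, integral_zero] at hbias
  linarith

/-- Doubly robust identity for the counterfactual mean `ψ₀ = E[(A/p(X))Y]`.
`mX` is the σ-algebra generated by the covariates `X`; the propensity score is
`p` (so `E[A | X] = p` a.e.) and the outcome regression `b` satisfies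
`E[A·Y | X] = p·b` a.e. (equivalent to `b = E[Y | A = 1, X]` since `A` is binary). -/
theorem doubly_robust_identity
    {Ω : Type*} {mΩ : MeasurableSpace Ω} (μ : Measure Ω) [IsProbabilityMeasure μ]
    (mX : MeasurableSpace Ω) (hmX : mX ≤ mΩ)
    (A Y p b pstar bstar : Ω → ℝ)
    (hA : ∀ ω, A ω = 0 ∨ A ω = 1)
    -- p, b, p*, b* are functions of X :
    (hpm : Measurable[mX] p) (hbm : Measurable[mX] b)
    (hpsm : Measurable[mX] pstar) (hbsm : Measurable[mX] bstar)
    -- p(X) = E[A | X] with 0 < p(X) < 1, p*(X) > 0 :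
    (hp : μ[A | mX] =ᵐ[μ] p)
    (hp01 : ∀ᵐ ω ∂μ, 0 < p ω ∧ p ω < 1)
    (hps : ∀ᵐ ω ∂μ, 0 < pstar ω)
    -- b(X) = E[Y | A = 1, X], i.e. E[A·Y | X] = p(X)·b(X) :
    (hb : μ[fun ω => A ω * Y ω | mX] =ᵐ[μ] fun ω => p ω * b ω)
    -- integrability of all quantities appearing below :
    (hint1 : Integrable (fun ω => A ω / pstar ω * Y ω
              - A ω / pstar ω * bstar ω + bstar ω) μ)
    (hint2 : Integrable (fun ω => A ω / p ω * Y ω) μ)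
    (hint3 : Integrable (fun ω => (p ω / pstar ω - 1) * (b ω - bstar ω)) μ)
    (hAY : Integrable (fun ω => A ω * Y ω) μ) (hAint : Integrable A μ) :
    ((∫ ω, (A ω / pstar ω * Y ω - A ω / pstar ω * bstar ω + bstar ω) ∂μ)
        - ∫ ω, A ω / p ω * Y ω ∂μ
      = ∫ ω, (p ω / pstar ω - 1) * (b ω - bstar ω) ∂μ) ∧
    ((pstar =ᵐ[μ] p ∨ bstar =ᵐ[μ] b) →
      (∫ ω, (A ω / pstar ω * Y ω - A ω / pstar ω * bstar ω + bstar ω) ∂μ)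
        = ∫ ω, A ω / p ω * Y ω ∂μ) :=
  doubly_robust_identity_general μ mX hmX A Y p b pstar bstar hpm hpsm hbsm hp hp01 hps hb hint1
    hint2 hint3 hAY hAint
end

section
/- Suppose ψ_{k,l} (k ∈ K, l ∈ L finite) are real numbers such that ψ_{k*,l} = ψ₀ for all l and ψ_{k,l*} = ψ₀ for all k, for some fixed pair (k*, l*) (i.e., a 'doubly robust' pair exists). Then the mixed-minimax pseudo-risk at (k*, l*) satisfies B⁽²⁾_{k*,l*} = 0, and hence any minimizer (k̂,l̂) of B⁽²⁾ has B⁽²⁾_{k̂,l̂} = 0, which implies ψ_{k̂,l} is constant in l and ψ_{k,l̂} is constant in k; in particular ψ_{k̂,l̂} = ψ_{k̂,l*} = ψ₀. -/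
open Finset

/-- Double robustness of the mixed-minimax selector (population version): if a
doubly robust pair `(k*, l*)` exists, i.e. `ψ_{k*,l} = ψ₀` for all `l` and
`ψ_{k,l*} = ψ₀` for all `k`, then `B⁽²⁾_{k*,l*} = 0`, any minimizer `(k̂,l̂)` of
`B⁽²⁾` also has `B⁽²⁾_{k̂,l̂} = 0`, `ψ_{k̂,·}` and `ψ_{·,l̂}` are constant, and
`ψ_{k̂,l̂} = ψ₀`. -/
theorem mixed_minimax_doubly_robust
    {K L : Type*} [Fintype K] [Fintype L] [Nonempty K] [Nonempty L]
    (ψ : K → L → ℝ) (ψ0 : ℝ) (kstar : K) (lstar : L)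
    (hk : ∀ l, ψ kstar l = ψ0) (hl : ∀ k, ψ k lstar = ψ0)
    (B2 : K → L → ℝ)
    (hB2 : ∀ k0 l0, B2 k0 l0
      = Finset.univ.sup' Finset.univ_nonempty
          (fun q : L × L => (ψ k0 q.1 - ψ k0 q.2) ^ 2)
        + Finset.univ.sup' Finset.univ_nonempty
          (fun q : K × K => (ψ q.1 l0 - ψ q.2 l0) ^ 2)) :
    B2 kstar lstar = 0 ∧
    ∀ (khat : K) (lhat : L),
      (∀ k l, B2 khat lhat ≤ B2 k l) →
      B2 khat lhat = 0 ∧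
      (∀ l1 l2, ψ khat l1 = ψ khat l2) ∧
      (∀ k1 k2, ψ k1 lhat = ψ k2 lhat) ∧
      ψ khat lhat = ψ0 := by

  have hstar : B2 kstar lstar = 0 := by
    rw [hB2]
    have h1 : (Finset.univ.sup' Finset.univ_nonempty
        (fun q : L × L => (ψ kstar q.1 - ψ kstar q.2) ^ 2)) = 0 := by
      apply le_antisymm
      · apply Finset.sup'_le
        intro q _
        simp [hk]
      · exact Finset.le_sup'_of_le _ (Finset.mem_univ (Classical.arbitrary _)) (by simp [hk])
    have h2 : (Finset.univ.sup' Finset.univ_nonempty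
        (fun q : K × K => (ψ q.1 lstar - ψ q.2 lstar) ^ 2)) = 0 := by
      apply le_antisymm
      · apply Finset.sup'_le
        intro q _
        simp [hl]
      · exact Finset.le_sup'_of_le _ (Finset.mem_univ (Classical.arbitrary _)) (by simp [hl])
    rw [h1, h2, add_zero]
  refine ⟨hstar, fun khat lhat hmin => ?_⟩
  set S1 := Finset.univ.sup' Finset.univ_nonempty
      (fun q : L × L => (ψ khat q.1 - ψ khat q.2) ^ 2) with hS1
  set S2 := Finset.univ.sup' Finset.univ_nonempty
      (fun q : K × K => (ψ q.1 lhat - ψ q.2 lhat) ^ 2) with hS2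
  have hS1nn : 0 ≤ S1 :=
    Finset.le_sup'_of_le _ (Finset.mem_univ (Classical.arbitrary _)) (sq_nonneg _)
  have hS2nn : 0 ≤ S2 :=
    Finset.le_sup'_of_le _ (Finset.mem_univ (Classical.arbitrary _)) (sq_nonneg _)
  have hhat : B2 khat lhat = 0 := by
    have := hmin kstar lstar
    rw [hstar] at this
    have : 0 ≤ B2 khat lhat := by rw [hB2]; exact add_nonneg hS1nn hS2nn
    linarith [hmin kstar lstar, hstar ▸ hmin kstar lstar]
  have hsum : S1 + S2 = 0 := by rw [hB2] at hhat; exact hhat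
  have hS1z : S1 = 0 := by linarith
  have hS2z : S2 = 0 := by linarith
  have hψl : ∀ l1 l2, ψ khat l1 = ψ khat l2 := by
    intro l1 l2
    have : (ψ khat l1 - ψ khat l2) ^ 2 ≤ S1 := hS1 ▸
      Finset.le_sup' (fun q : L × L => (ψ khat q.1 - ψ khat q.2) ^ 2) (Finset.mem_univ (l1, l2))
    rw [hS1z] at this
    have := le_antisymm this (sq_nonneg _)
    have := pow_eq_zero_iff (n := 2) (by norm_num) |>.1 this
    linarith
  have hψk : ∀ k1 k2, ψ k1 lhat = ψ k2 lhat := by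
    intro k1 k2
    have : (ψ k1 lhat - ψ k2 lhat) ^ 2 ≤ S2 := hS2 ▸
      Finset.le_sup' (fun q : K × K => (ψ q.1 lhat - ψ q.2 lhat) ^ 2) (Finset.mem_univ (k1, k2))
    rw [hS2z] at this
    have := le_antisymm this (sq_nonneg _)
    have := pow_eq_zero_iff (n := 2) (by norm_num) |>.1 this
    linarith
  exact ⟨hhat, hψl, hψk, by rw [hψl lhat lstar, hl]⟩
end
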